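/- Kinetic energy bound, uniform in P and α (power case): if (u, m, H̄) is a classical solution of the power-type ergodic MFG system, then ∫_Q ½|∇u|²(m+1) dy ≤ ∫_Q v(y) dy. -/

import Mathlib

open MeasureTheory Real

/-- Partial derivative in direction `i`. -/
noncomputable def pd {n : ℕ} (i : Fin n) (f : (Fin n → ℝ) → ℝ) (x : Fin n → ℝ) : ℝ :=
  fderiv ℝ f x (Pi.single i 1)

/-- Laplacian: sum of second partial derivatives. -/
noncomputable def lap {n : ℕ} (f : (Fin n → ℝ) → ℝ) (x : Fin n → ℝ) : ℝ :=
  ∑ i, pd i (pd i f) x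

/-- Divergence of a vector field. -/
noncomputable def dvg {n : ℕ} (F : (Fin n → ℝ) → Fin n → ℝ) (x : Fin n → ℝ) : ℝ :=
  ∑ i, pd i (fun y => F y i) x

/-- `ℤⁿ`-periodicity. -/
def ZPeriodic {n : ℕ} (f : (Fin n → ℝ) → ℝ) : Prop :=
  ∀ (k : Fin n → ℤ) (x : Fin n → ℝ), f (x + fun i => (k i : ℝ)) = f x

/-- The unit cube `Q = [0,1]ⁿ`. -/
def unitCube (n : ℕ) : Set (Fin n → ℝ) := Set.Icc 0 1

/-- A classical solution `(u, m, H)` of the power-type ergodic MFG system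
`-Δu + ½|∇u+P|² - v - αᑫ mᑫ = H`, `-Δm - div(m(∇u+P)) = 0`, `∫ u = 0`, `∫ m = 1`. -/
structure PowerMFG {n : ℕ} (v : (Fin n → ℝ) → ℝ) (P : Fin n → ℝ) (α q : ℝ)
    (u m : (Fin n → ℝ) → ℝ) (H : ℝ) : Prop where
  hu : ContDiff ℝ 2 u
  hm : ContDiff ℝ 2 m
  hup : ZPeriodic u
  hmp : ZPeriodic m
  hmpos : ∀ x, 0 < m x
  hHJB : ∀ x, -lap u x + (∑ i, (pd i u x + P i) ^ 2) / 2 - v x - α ^ q * (m x) ^ q = H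
  hFP : ∀ x, -lap m x - dvg (fun y j => m y * (pd j u y + P j)) x = 0
  humean : (∫ y in unitCube n, u y) = 0
  hmmean : (∫ y in unitCube n, m y) = 1

section Infrastructure

variable {n : ℕ}

lemma fderiv_shift (f : (Fin n → ℝ) → ℝ) (hf : Differentiable ℝ f) (c x : Fin n → ℝ) :
    fderiv ℝ (fun y => f (y + c)) x = fderiv ℝ f (x + c) := by
  have h := (hf (x + c)).hasFDerivAt
  have h2 := h.comp x ((hasFDerivAt_id x).add_const c)
  simpa [Function.comp_def] using h2.fderiv

lemma pd_periodic (i : Fin n) (f : (Fin n → ℝ) → ℝ) (hf : Differentiable ℝ f)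
    (hp : ZPeriodic f) : ZPeriodic (pd i f) := by
  intro k x
  have hfe : (fun y => f (y + fun j => (k j : ℝ))) = f := funext fun y => hp k y
  have key : fderiv ℝ f (x + fun j => (k j : ℝ)) = fderiv ℝ f x := by
    rw [← fderiv_shift f hf (fun j => (k j : ℝ)) x, hfe]
  unfold pd
  rw [key]

lemma cont_pd (i : Fin n) (f : (Fin n → ℝ) → ℝ) (hf : ContDiff ℝ 1 f) :
    Continuous (pd i f) :=
  (hf.continuous_fderiv one_ne_zero).clm_apply continuous_const

lemma contDiff_pd (i : Fin n) (f : (Fin n → ℝ) → ℝ) (hf : ContDiff ℝ 2 f) :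
    ContDiff ℝ 1 (pd i f) :=
  (hf.fderiv_right (by norm_num)).clm_apply contDiff_const

lemma pd_mul (i : Fin n) (f g : (Fin n → ℝ) → ℝ) (x : Fin n → ℝ)
    (hf : DifferentiableAt ℝ f x) (hg : DifferentiableAt ℝ g x) :
    pd i (fun y => f y * g y) x = pd i f x * g x + f x * pd i g x := by
  unfold pd
  rw [fderiv_fun_mul hf hg]
  simp only [ContinuousLinearMap.add_apply, ContinuousLinearMap.smul_apply, smul_eq_mul]
  ring

lemma measQ : MeasurableSet (unitCube n) := by
  unfold unitCube; exact measurableSet_Icc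

lemma intC (f : (Fin n → ℝ) → ℝ) (hf : Continuous f) :
    IntegrableOn f (unitCube n) volume := by
  unfold unitCube
  exact hf.continuousOn.integrableOn_compact isCompact_Icc

lemma vol_unitCube : volume (unitCube n) = 1 := by
  unfold unitCube
  rw [Real.volume_Icc_pi]
  simp

lemma setIntegral_one : (∫ _ in unitCube n, (1 : ℝ)) = 1 := by
  rw [setIntegral_const, measureReal_def, vol_unitCube]
  simp

lemma insertNth_one_eq {n : ℕ} (i : Fin (n + 1)) (x : Fin n → ℝ) :
    i.insertNth (1 : ℝ) x
      = i.insertNth (0 : ℝ) x + fun j => (((Pi.single i 1 : Fin (n + 1) → ℤ) j : ℝ)) := by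
  funext j
  refine Fin.succAboveCases i ?_ ?_ j
  · simp
  · intro k
    simp [Pi.single_eq_of_ne (Fin.succAbove_ne i k)]

lemma intg_pd_zero {n : ℕ} (i : Fin (n + 1)) (f : (Fin (n + 1) → ℝ) → ℝ)
    (hf : ContDiff ℝ 1 f) (hp : ZPeriodic f) :
    ∫ y in unitCube (n + 1), pd i f y = 0 := by
  have hd : Differentiable ℝ f := hf.differentiable one_ne_zero
  have hle : (0 : Fin (n + 1) → ℝ) ≤ 1 := fun j => by norm_num
  have hint : IntegrableOn (pd i f) (Set.Icc (0 : Fin (n + 1) → ℝ) 1) volume :=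
    (cont_pd i f hf).continuousOn.integrableOn_compact isCompact_Icc
  have hsum : ∀ x : Fin (n + 1) → ℝ,
      (∑ j : Fin (n + 1), (if j = i then fderiv ℝ f x else 0) (Pi.single j 1)) = pd i f x := by
    intro x
    rw [Finset.sum_eq_single i (fun b _ hb => by simp [hb])
      (fun h => absurd (Finset.mem_univ i) h)]
    simp [pd]
  have key := MeasureTheory.integral_divergence_of_hasFDerivAt_off_countable'
      (0 : Fin (n + 1) → ℝ) 1 hle
      (fun j => if j = i then f else 0)
      (fun j x => if j = i then fderiv ℝ f x else 0)
      ∅ Set.countable_empty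
      (fun j => by
        by_cases h : j = i
        · simpa [h] using hd.continuous.continuousOn
        · simp [h]; exact continuousOn_const)
      (fun x _ j => by
        by_cases h : j = i
        · simpa [h] using (hd x).hasFDerivAt
        · simpa [h] using hasFDerivAt_zero (𝕜 := ℝ) (F := ℝ) x)
      (by
        apply hint.congr_fun _ measurableSet_Icc
        intro x _
        exact (hsum x).symm)
  have hL : (∫ x in Set.Icc (0 : Fin (n + 1) → ℝ) 1,
      ∑ j, (if j = i then fderiv ℝ f x else 0) (Pi.single j 1))
        = ∫ y in unitCube (n + 1), pd i f y := by
    apply setIntegral_congr_fun measurableSet_Icc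
    intro x _
    exact hsum x
  rw [hL] at key
  rw [key]
  apply Finset.sum_eq_zero
  intro j _
  by_cases h : j = i
  · subst h
    rw [sub_eq_zero]
    apply setIntegral_congr_fun measurableSet_Icc
    intro x _
    show (if j = j then f else 0) (j.insertNth ((1 : Fin (n + 1) → ℝ) j) x)
        = (if j = j then f else 0) (j.insertNth ((0 : Fin (n + 1) → ℝ) j) x)
    rw [if_pos rfl]
    simp only [Pi.one_apply, Pi.zero_apply]
    rw [insertNth_one_eq j x, hp (Pi.single j 1)]
  · simp [h]

/-- Integration by parts on the torus. -/
lemma intg_ibp {n : ℕ} (i : Fin (n + 1)) (f g : (Fin (n + 1) → ℝ) → ℝ)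
    (hf : ContDiff ℝ 1 f) (hg : ContDiff ℝ 1 g) (hfp : ZPeriodic f) (hgp : ZPeriodic g) :
    ∫ y in unitCube (n + 1), pd i f y * g y
      = - ∫ y in unitCube (n + 1), f y * pd i g y := by
  have hfg : ContDiff ℝ 1 (fun y => f y * g y) := hf.mul hg
  have hper : ZPeriodic (fun y => f y * g y) := by
    intro k x
    show f _ * g _ = f x * g x
    rw [hfp k x, hgp k x]
  have h0 := intg_pd_zero i _ hfg hper
  have hsplit : (∫ y in unitCube (n + 1), pd i (fun z => f z * g z) y)
      = (∫ y in unitCube (n + 1), pd i f y * g y)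
        + ∫ y in unitCube (n + 1), f y * pd i g y := by
    rw [setIntegral_congr_fun measQ (fun y _ =>
      pd_mul i f g y (hf.differentiable one_ne_zero y)
        (hg.differentiable one_ne_zero y))]
    exact integral_add (intC _ ((cont_pd i f hf).fun_mul hg.continuous))
      (intC _ (hf.continuous.fun_mul (cont_pd i g hg)))
  have h0' : (∫ y in unitCube (n + 1), pd i (fun z => f z * g z) y) = 0 := h0
  linarith [hsplit, h0']

end Infrastructure

/-- Kinetic energy bound, uniform in `P` and `α` (power case). -/
theorem power_mfg_kinetic_bound {n : ℕ} (hn : 1 ≤ n)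
    (v : (Fin n → ℝ) → ℝ) (hv0 : ∀ x, 0 ≤ v x) (hvlip : ∃ K, LipschitzWith K v) (hvper : ZPeriodic v)
    (P : Fin n → ℝ) (α q : ℝ) (hα : 0 ≤ α) (hq : 0 < q)
    (u m : (Fin n → ℝ) → ℝ) (H : ℝ)
    (h : PowerMFG v P α q u m H) :
    (∫ y in unitCube n, (∑ i, (pd i u y) ^ 2) / 2 * (m y + 1))
      ≤ ∫ y in unitCube n, v y := by
  obtain ⟨k, rfl⟩ : ∃ k, n = k + 1 := ⟨n - 1, (Nat.succ_pred_eq_of_pos hn).symm⟩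
  -- basic regularity facts
  have d1u : ContDiff ℝ 1 u := h.hu.of_le (by norm_num)
  have d1m : ContDiff ℝ 1 m := h.hm.of_le (by norm_num)
  have du : Differentiable ℝ u := d1u.differentiable one_ne_zero
  have dm : Differentiable ℝ m := d1m.differentiable one_ne_zero
  have dpu : ∀ i, ContDiff ℝ 1 (pd i u) := fun i => contDiff_pd i u h.hu
  have dpm : ∀ i, ContDiff ℝ 1 (pd i m) := fun i => contDiff_pd i m h.hm
  have cpu : ∀ i, Continuous (pd i u) := fun i => (dpu i).continuous
  have cpm : ∀ i, Continuous (pd i m) := fun i => (dpm i).continuous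
  have cppu : ∀ i, Continuous (pd i (pd i u)) := fun i => cont_pd i _ (dpu i)
  have cppm : ∀ i, Continuous (pd i (pd i m)) := fun i => cont_pd i _ (dpm i)
  have pup : ∀ i, ZPeriodic (pd i u) := fun i => pd_periodic i u du h.hup
  have pmp : ∀ i, ZPeriodic (pd i m) := fun i => pd_periodic i m dm h.hmp
  obtain ⟨K, hK⟩ := hvlip
  have cv : Continuous v := hK.continuous
  have cu : Continuous u := d1u.continuous
  have cm : Continuous m := d1m.continuous
  have cmq : Continuous (fun y => m y ^ q) :=
    cm.rpow_const (fun y => Or.inl (h.hmpos y).ne')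
  -- the vector field m * (∇u + P)
  have dmw : ∀ j, ContDiff ℝ 1 (fun y => m y * (pd j u y + P j)) :=
    fun j => d1m.mul ((dpu j).add contDiff_const)
  have cmw : ∀ j, Continuous (fun y => m y * (pd j u y + P j)) := fun j => (dmw j).continuous
  have pmw : ∀ j, ZPeriodic (fun y => m y * (pd j u y + P j)) := by
    intro j kk x
    show m _ * (pd j u _ + P j) = m x * (pd j u x + P j)
    rw [h.hmp kk x, pup j kk x]
  -- basic vanishing integrals
  have hI1 : ∀ i, (∫ y in unitCube (k + 1), pd i u y) = 0 := fun i => intg_pd_zero i u d1u h.hup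
  have hI2 : ∀ i, (∫ y in unitCube (k + 1), pd i (pd i u) y) = 0 :=
    fun i => intg_pd_zero i (pd i u) (dpu i) (pup i)
  -- E1 : integrate the HJB equation over Q
  have e1 : (∫ y in unitCube (k + 1), (-lap u y + (∑ i, (pd i u y + P i) ^ 2) / 2 - v y - α ^ q * m y ^ q))
      = H := by
    rw [setIntegral_congr_fun measQ (fun y _ => h.hHJB y), setIntegral_const]
    simp [measureReal_def, vol_unitCube]
  have intLap : IntegrableOn (fun y => lap u y) (unitCube (k + 1)) volume := by
    apply intC
    exact continuous_finset_sum _ (fun i _ => cppu i)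
  have contSW : Continuous (fun y => ∑ i, (pd i u y + P i) ^ 2) :=
    continuous_finset_sum _ (fun i _ => ((cpu i).add continuous_const).pow 2)
  have contSG : Continuous (fun y => ∑ i, (pd i u y) ^ 2) :=
    continuous_finset_sum _ (fun i _ => (cpu i).pow 2)
  have iNL : IntegrableOn (fun y => -lap u y) (unitCube (k + 1)) volume :=
    intC _ (continuous_finset_sum _ (fun i _ => cppu i)).neg
  have iSW2 : IntegrableOn (fun y => (∑ i, (pd i u y + P i) ^ 2) / 2)
      (unitCube (k + 1)) volume := intC _ (contSW.div_const 2)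
  have e1' : -(∫ y in unitCube (k + 1), lap u y) + (∫ y in unitCube (k + 1), ∑ i, (pd i u y + P i) ^ 2) / 2
      - (∫ y in unitCube (k + 1), v y) - α ^ q * (∫ y in unitCube (k + 1), m y ^ q) = H := by
    have i2 : IntegrableOn (fun y => -lap u y + (∑ i, (pd i u y + P i) ^ 2) / 2)
        (unitCube (k + 1)) volume := iNL.add iSW2
    have i3 : IntegrableOn (fun y => -lap u y + (∑ i, (pd i u y + P i) ^ 2) / 2 - v y)
        (unitCube (k + 1)) volume := i2.sub (intC _ cv)
    rw [← e1, integral_sub i3 (intC _ (continuous_const.fun_mul cmq)),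
      integral_sub i2 (intC _ cv),
      integral_add iNL iSW2, integral_neg, integral_div, integral_const_mul]
  have hLap0 : (∫ y in unitCube (k + 1), lap u y) = 0 := by
    unfold lap
    rw [integral_finset_sum _ (fun i _ => intC _ (cppu i))]
    exact Finset.sum_eq_zero fun i _ => hI2 i
  have hSW : (∫ y in unitCube (k + 1), ∑ i, (pd i u y + P i) ^ 2)
      = (∫ y in unitCube (k + 1), ∑ i, (pd i u y) ^ 2) + ∑ i, P i ^ 2 := by
    have pw : ∀ y, (∑ i, (pd i u y + P i) ^ 2)
        = (∑ i, (pd i u y) ^ 2) + ((∑ i, 2 * P i * pd i u y) + ∑ i, P i ^ 2) := by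
      intro y
      rw [← Finset.sum_add_distrib, ← Finset.sum_add_distrib]
      exact Finset.sum_congr rfl fun i _ => by ring
    rw [setIntegral_congr_fun measQ (fun y _ => pw y),
      integral_add (intC _ contSG) (intC _ ((continuous_finset_sum _
        (fun i _ => (continuous_const.fun_mul (cpu i)))).fun_add continuous_const)),
      integral_add (intC _ (continuous_finset_sum _ (fun i _ => continuous_const.fun_mul (cpu i))))
        (intC _ continuous_const),
      integral_finset_sum _ (fun i _ => intC _ (continuous_const.fun_mul (cpu i)))]
    have hz : (∑ i, ∫ y in unitCube (k + 1), 2 * P i * pd i u y) = 0 :=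
      Finset.sum_eq_zero fun i _ => by rw [integral_const_mul, hI1 i, mul_zero]
    rw [hz, setIntegral_const]
    simp [measureReal_def, vol_unitCube]
  -- E2 : integrate the HJB equation times m over Q
  have e2 : (∫ y in unitCube (k + 1), (-lap u y + (∑ i, (pd i u y + P i) ^ 2) / 2 - v y - α ^ q * m y ^ q) * m y)
      = H := by
    have pw2 : ∀ y ∈ unitCube (k + 1),
        (-lap u y + (∑ i, (pd i u y + P i) ^ 2) / 2 - v y - α ^ q * m y ^ q) * m y
          = H * m y := fun y _ => by rw [h.hHJB y]
    rw [setIntegral_congr_fun measQ pw2, integral_const_mul, h.hmmean, mul_one]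
  have contLap : Continuous (fun y => lap u y) :=
    continuous_finset_sum _ (fun i _ => cppu i)
  have e2' : -(∫ y in unitCube (k + 1), lap u y * m y) + (∫ y in unitCube (k + 1), (∑ i, (pd i u y + P i) ^ 2) * m y) / 2
      - (∫ y in unitCube (k + 1), v y * m y) - α ^ q * (∫ y in unitCube (k + 1), m y ^ q * m y) = H := by
    rw [← e2]
    have pw : ∀ y, (-lap u y + (∑ i, (pd i u y + P i) ^ 2) / 2 - v y - α ^ q * m y ^ q) * m y
        = -(lap u y * m y) + ((∑ i, (pd i u y + P i) ^ 2) * m y) / 2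
          - v y * m y - α ^ q * (m y ^ q * m y) := by intro y; ring
    have iNLM : IntegrableOn (fun y => -(lap u y * m y)) (unitCube (k + 1)) volume :=
      intC _ (contLap.fun_mul cm).neg
    have iSWM : IntegrableOn (fun y => ((∑ i, (pd i u y + P i) ^ 2) * m y) / 2)
        (unitCube (k + 1)) volume := intC _ ((contSW.fun_mul cm).div_const 2)
    rw [setIntegral_congr_fun measQ (fun y _ => pw y),
      integral_sub (show IntegrableOn (fun y => -(lap u y * m y)
          + ((∑ i, (pd i u y + P i) ^ 2) * m y) / 2 - v y * m y) (unitCube (k + 1)) volume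
        from (iNLM.add iSWM).sub (intC _ (cv.fun_mul cm)))
        (intC _ (continuous_const.fun_mul (cmq.fun_mul cm))),
      integral_sub (show IntegrableOn (fun y => -(lap u y * m y)
          + ((∑ i, (pd i u y + P i) ^ 2) * m y) / 2) (unitCube (k + 1)) volume
        from iNLM.add iSWM) (intC _ (cv.fun_mul cm)),
      integral_add iNLM iSWM, integral_neg, integral_div, integral_const_mul]
  -- Key identity from the FP equation tested against u
  have ibp1 : ∀ i, (∫ y in unitCube (k + 1), pd i (pd i u) y * m y) = - ∫ y in unitCube (k + 1), pd i u y * pd i m y :=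
    fun i => intg_ibp i (pd i u) m (dpu i) d1m (pup i) h.hmp
  have ibp2 : ∀ i, (∫ y in unitCube (k + 1), pd i (pd i m) y * u y) = - ∫ y in unitCube (k + 1), pd i m y * pd i u y :=
    fun i => intg_ibp i (pd i m) u (dpm i) d1u (pmp i) h.hup
  have ibp3 : ∀ i, (∫ y in unitCube (k + 1), pd i (fun z => m z * (pd i u z + P i)) y * u y)
      = - ∫ y in unitCube (k + 1), (m y * (pd i u y + P i)) * pd i u y :=
    fun i => intg_ibp i _ u (dmw i) d1u (pmw i) h.hup
  have fp : ∀ y, lap m y = - ∑ i, pd i (fun z => m z * (pd i u z + P i)) y := by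
    intro y
    have h0 := h.hFP y
    have hd : dvg (fun y j => m y * (pd j u y + P j)) y
        = ∑ i, pd i (fun z => m z * (pd i u z + P i)) y := rfl
    rw [hd] at h0
    linarith
  have contmwd : ∀ i, Continuous (pd i (fun z => m z * (pd i u z + P i))) :=
    fun i => cont_pd i _ (dmw i)
  have hKey : (∫ y in unitCube (k + 1), lap u y * m y)
      = ∑ i, ∫ y in unitCube (k + 1), (m y * (pd i u y + P i)) * pd i u y := by
    have lhs1 : (∫ y in unitCube (k + 1), lap u y * m y) = ∑ i, ∫ y in unitCube (k + 1), pd i (pd i u) y * m y := by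
      have pw : ∀ y, lap u y * m y = ∑ i, pd i (pd i u) y * m y := by
        intro y; unfold lap; rw [Finset.sum_mul]
      rw [setIntegral_congr_fun measQ (fun y _ => pw y),
        integral_finset_sum _ (fun i _ => intC _ ((cppu i).fun_mul cm))]
    have lhs2 : (∫ y in unitCube (k + 1), lap m y * u y) = ∑ i, ∫ y in unitCube (k + 1), pd i (pd i m) y * u y := by
      have pw : ∀ y, lap m y * u y = ∑ i, pd i (pd i m) y * u y := by
        intro y; unfold lap; rw [Finset.sum_mul]
      rw [setIntegral_congr_fun measQ (fun y _ => pw y),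
        integral_finset_sum _ (fun i _ => intC _ ((cppm i).fun_mul cu))]
    have rhs1 : (∫ y in unitCube (k + 1), lap m y * u y)
        = - ∑ i, ∫ y in unitCube (k + 1), pd i (fun z => m z * (pd i u z + P i)) y * u y := by
      have pw : ∀ y, lap m y * u y
          = - ∑ i, pd i (fun z => m z * (pd i u z + P i)) y * u y := by
        intro y; rw [fp y, ← Finset.sum_mul]; ring
      rw [setIntegral_congr_fun measQ (fun y _ => pw y), ← integral_finset_sum _
        (fun i _ => intC _ ((contmwd i).fun_mul cu)), integral_neg]
    have swap : ∀ i, (∫ y in unitCube (k + 1), pd i u y * pd i m y) = ∫ y in unitCube (k + 1), pd i m y * pd i u y := by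
      intro i
      exact setIntegral_congr_fun measQ (fun y _ => mul_comm _ _)
    calc (∫ y in unitCube (k + 1), lap u y * m y) = ∑ i, ∫ y in unitCube (k + 1), pd i (pd i u) y * m y := lhs1
      _ = ∑ i, -∫ y in unitCube (k + 1), pd i u y * pd i m y := Finset.sum_congr rfl fun i _ => ibp1 i
      _ = ∑ i, -∫ y in unitCube (k + 1), pd i m y * pd i u y := by
          exact Finset.sum_congr rfl fun i _ => by rw [swap i]
      _ = ∑ i, ∫ y in unitCube (k + 1), pd i (pd i m) y * u y :=
          Finset.sum_congr rfl fun i _ => (ibp2 i).symm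
      _ = ∫ y in unitCube (k + 1), lap m y * u y := lhs2.symm
      _ = - ∑ i, ∫ y in unitCube (k + 1), pd i (fun z => m z * (pd i u z + P i)) y * u y := rhs1
      _ = - ∑ i, - ∫ y in unitCube (k + 1), (m y * (pd i u y + P i)) * pd i u y := by
          rw [Finset.sum_congr rfl fun i _ => ibp3 i]
      _ = ∑ i, ∫ y in unitCube (k + 1), (m y * (pd i u y + P i)) * pd i u y := by
          rw [Finset.sum_neg_distrib, neg_neg]
  -- combine the quadratic terms
  have hComb : (∫ y in unitCube (k + 1), (∑ i, (pd i u y + P i) ^ 2) * m y)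
      - 2 * (∑ i, ∫ y in unitCube (k + 1), (m y * (pd i u y + P i)) * pd i u y)
      = (∑ i, P i ^ 2) - (∫ y in unitCube (k + 1), m y * (∑ i, (pd i u y) ^ 2)) := by
    have pw : ∀ y, (∑ i, (pd i u y + P i) ^ 2) * m y
        - 2 * (∑ i, (m y * (pd i u y + P i)) * pd i u y)
        = m y * (∑ i, P i ^ 2) - m y * (∑ i, (pd i u y) ^ 2) := by
      intro y
      rw [Finset.sum_mul, Finset.mul_sum, Finset.mul_sum, Finset.mul_sum,
        ← Finset.sum_sub_distrib, ← Finset.sum_sub_distrib]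
      exact Finset.sum_congr rfl fun i _ => by ring
    have hmain : (∫ y in unitCube (k + 1), ((∑ i, (pd i u y + P i) ^ 2) * m y
        - 2 * (∑ i, (m y * (pd i u y + P i)) * pd i u y)))
        = (∫ y in unitCube (k + 1), (m y * (∑ i, P i ^ 2) - m y * (∑ i, (pd i u y) ^ 2))) :=
      setIntegral_congr_fun measQ (fun y _ => pw y)
    have contmwg : Continuous (fun y => ∑ i, (m y * (pd i u y + P i)) * pd i u y) :=
      continuous_finset_sum _ (fun i _ => (cmw i).mul (cpu i))
    rw [integral_sub (intC _ (contSW.fun_mul cm)) (intC _ (continuous_const.fun_mul contmwg)),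
      integral_const_mul, integral_finset_sum _ (fun i _ => intC _ ((cmw i).fun_mul (cpu i)))]
      at hmain
    rw [integral_sub (intC _ (cm.fun_mul continuous_const)) (intC _ (cm.fun_mul contSG)),
      integral_mul_const] at hmain
    have hm1 : (∫ y in unitCube (k + 1), m y) = 1 := h.hmmean
    rw [hm1, one_mul] at hmain
    exact hmain
  -- goal decomposition
  have goalEq : (∫ y in unitCube (k + 1), (∑ i, (pd i u y) ^ 2) / 2 * (m y + 1))
      = ((∫ y in unitCube (k + 1), m y * (∑ i, (pd i u y) ^ 2)) + (∫ y in unitCube (k + 1), ∑ i, (pd i u y) ^ 2)) / 2 := by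
    have pw : ∀ y, (∑ i, (pd i u y) ^ 2) / 2 * (m y + 1)
        = (m y * (∑ i, (pd i u y) ^ 2) + (∑ i, (pd i u y) ^ 2)) / 2 := by intro y; ring
    rw [setIntegral_congr_fun measQ (fun y _ => pw y), integral_div,
      integral_add (intC _ (cm.fun_mul contSG)) (intC _ contSG)]
  -- positivity facts
  have hVM : 0 ≤ ∫ y in unitCube (k + 1), v y * m y :=
    setIntegral_nonneg measQ (fun y _ => mul_nonneg (hv0 y) (h.hmpos y).le)
  have hMq : (∫ y in unitCube (k + 1), m y ^ q) ≤ ∫ y in unitCube (k + 1), m y ^ q * m y := by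
    have pw : ∀ y, m y - 1 ≤ m y ^ q * m y - m y ^ q := by
      intro y
      rcases le_total 1 (m y) with hy | hy
      · have h1 : (1 : ℝ) ≤ m y ^ q := by
          have := Real.rpow_le_rpow zero_le_one hy hq.le
          rwa [Real.one_rpow] at this
        nlinarith [mul_nonneg (sub_nonneg.2 h1) (sub_nonneg.2 hy)]
      · have h1 : m y ^ q ≤ 1 := by
          have := Real.rpow_le_rpow (h.hmpos y).le hy hq.le
          rwa [Real.one_rpow] at this
        nlinarith [mul_nonneg (sub_nonneg.2 h1) (sub_nonneg.2 hy)]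
    have hmono : (∫ y in unitCube (k + 1), (m y - 1)) ≤ ∫ y in unitCube (k + 1), (m y ^ q * m y - m y ^ q) := by
      apply setIntegral_mono_on (intC _ (cm.fun_sub continuous_const))
        (intC _ ((cmq.fun_mul cm).fun_sub cmq)) measQ (fun y _ => pw y)
    have hL : (∫ y in unitCube (k + 1), (m y - 1)) = 0 := by
      rw [integral_sub (intC _ cm) (intC _ continuous_const)]
      have hm1 : (∫ y in unitCube (k + 1), m y) = 1 := h.hmmean
      rw [hm1, setIntegral_const]
      simp [measureReal_def, vol_unitCube]
    have hR : (∫ y in unitCube (k + 1), (m y ^ q * m y - m y ^ q))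
        = (∫ y in unitCube (k + 1), m y ^ q * m y) - ∫ y in unitCube (k + 1), m y ^ q := by
      exact integral_sub (intC _ (cmq.fun_mul cm)) (intC _ cmq)
    rw [hL, hR] at hmono
    linarith
  have hαq : (0 : ℝ) ≤ α ^ q := Real.rpow_nonneg hα q
  -- final arithmetic
  have hprod : 0 ≤ α ^ q * ((∫ y in unitCube (k + 1), m y ^ q * m y) - ∫ y in unitCube (k + 1), m y ^ q) :=
    mul_nonneg hαq (by linarith)
  rw [goalEq]
  rw [hLap0] at e1'
  rw [hKey] at e2'
  rw [hSW] at e1'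
  linarith [e1', e2', hComb, hVM, hprod]
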